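/- arXiv:2412.06420 — 2 statements merged into one kernel-verified Lean document; each statement's English description precedes it below -/
import Mathlib

section
/- (Schervish form implies propriety for estimates.) Let acc : ℝ × ℝ → ℝ with acc_k(x) = acc_k(k) - ∫_x^k (k - t)·m(t) dt for a nonnegative locally integrable m. Let Ω be a finite sample space, V : Ω → ℝ a random variable, p a probability mass function on Ω, and e := Σ_ω p(ω)·V(ω). Then for every x, Σ_ω p(ω)·acc_{V(ω)}(e) - Σ_ω p(ω)·acc_{V(ω)}(x) = ∫_x^e (e - t)·m(t) dt ≥ 0; hence x ↦ Σ_ω p(ω)·acc_{V(ω)}(x) is maximised at x = e. If m is strictly positive, the maximiser is unique. -/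
/-!
Integrating the Schervish form between `x` and `y` gives `acc k y - acc k x = ∫ t in x..y, (k - t) * m t`.
The integrand is affine in `k`, so averaging over `k = V ω` with weights `p ω` replaces `k` by the
mean `e`. The loss `∫ t in x..e, (e - t) * m t` of reporting `x` instead of `e` is nonnegative for
either orientation of the interval, because `e - t` and `e - x` have the same sign on it.
-/

open MeasureTheory intervalIntegral

section SchervishIntegral

variable {m : ℝ → ℝ} {a b x y : ℝ}

lemma IntervalIntegrable.sub_mul_left (hm : IntervalIntegrable m volume a b) (c : ℝ) :
    IntervalIntegrable (fun t => (c - t) * m t) volume a b :=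
  hm.continuousOn_mul (by fun_prop)

lemma integral_sub_mul_eq_integral_sub_mul_swap (c x : ℝ) :
    ∫ t in x..c, (c - t) * m t = ∫ t in c..x, (t - c) * m t := by
  rw [integral_symm, ← intervalIntegral.integral_neg]
  congr 1 with t
  ring

lemma integral_sub_mul_nonneg (hm : ∀ t, 0 ≤ m t) (c x : ℝ) :
    0 ≤ ∫ t in x..c, (c - t) * m t := by
  rcases le_total x c with hxc | hcx
  · exact integral_nonneg hxc fun t ht => mul_nonneg (sub_nonneg.2 ht.2) (hm t)
  · rw [integral_sub_mul_eq_integral_sub_mul_swap]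
    exact integral_nonneg hcx fun t ht => mul_nonneg (sub_nonneg.2 ht.1) (hm t)

lemma integral_sub_mul_pos (hm : ∀ t, 0 < m t)
    (hint : ∀ a b, IntervalIntegrable m volume a b) {c x : ℝ} (hxc : x ≠ c) :
    0 < ∫ t in x..c, (c - t) * m t := by
  rcases hxc.lt_or_gt with hxc | hcx
  · exact intervalIntegral_pos_of_pos_on ((hint x c).sub_mul_left c)
      (fun t ht => mul_pos (sub_pos.2 ht.2) (hm t)) hxc
  · rw [integral_sub_mul_eq_integral_sub_mul_swap]
    refine intervalIntegral_pos_of_pos_on ?_ (fun t ht => mul_pos (sub_pos.2 ht.1) (hm t)) hcx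
    exact (hint c x).continuousOn_mul (by fun_prop)

lemma sub_eq_integral_of_schervish {acc : ℝ → ℝ → ℝ}
    (hint : ∀ a b, IntervalIntegrable m volume a b)
    (hacc : ∀ k x : ℝ, acc k x = acc k k - ∫ t in x..k, (k - t) * m t) (k x y : ℝ) :
    acc k y - acc k x = ∫ t in x..y, (k - t) * m t := by
  rw [hacc k y, hacc k x, ← integral_add_adjacent_intervals
    ((hint x y).sub_mul_left k) ((hint y k).sub_mul_left k)]
  ring

lemma sum_mul_integral_sub_mul {ι : Type*} (s : Finset ι) (V p : ι → ℝ) (hp1 : ∑ i ∈ s, p i = 1)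
    (hint : IntervalIntegrable m volume x y) :
    ∑ i ∈ s, p i * ∫ t in x..y, (V i - t) * m t
      = ∫ t in x..y, ((∑ i ∈ s, p i * V i) - t) * m t := by
  simp_rw [← intervalIntegral.integral_const_mul]
  rw [← integral_finsetSum fun i _ => (hint.sub_mul_left (V i)).const_mul (p i)]
  congr 1 with t
  calc ∑ i ∈ s, p i * ((V i - t) * m t)
      = (∑ i ∈ s, p i * V i) * m t - (∑ i ∈ s, p i) * (t * m t) := by
        rw [Finset.sum_mul, Finset.sum_mul, ← Finset.sum_sub_distrib]
        exact Finset.sum_congr rfl fun i _ => by ring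
    _ = ((∑ i ∈ s, p i * V i) - t) * m t := by rw [hp1]; ring

end SchervishIntegral

theorem schervish_form_implies_proper_estimates_general
    (acc : ℝ → ℝ → ℝ) (m : ℝ → ℝ)
    (hm_nonneg : ∀ t, 0 ≤ m t)
    (hm_int : ∀ a b : ℝ, IntervalIntegrable m MeasureTheory.volume a b)
    (hacc : ∀ k x : ℝ, acc k x = acc k k - ∫ t in x..k, (k - t) * m t)
    (Ω : Type) [Fintype Ω] (V : Ω → ℝ) (p : Ω → ℝ)
    (hp1 : ∑ ω, p ω = 1) :
    (∀ x : ℝ,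
      (∑ ω, p ω * acc (V ω) (∑ ω, p ω * V ω)) - (∑ ω, p ω * acc (V ω) x)
        = ∫ t in x..(∑ ω, p ω * V ω), ((∑ ω, p ω * V ω) - t) * m t) ∧
    (∀ x : ℝ,
      ∑ ω, p ω * acc (V ω) x ≤ ∑ ω, p ω * acc (V ω) (∑ ω, p ω * V ω)) ∧
    ((∀ t, 0 < m t) → ∀ x : ℝ, x ≠ ∑ ω, p ω * V ω →
      ∑ ω, p ω * acc (V ω) x < ∑ ω, p ω * acc (V ω) (∑ ω, p ω * V ω)) := by
  set e := ∑ ω, p ω * V ω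
  have gain : ∀ x, (∑ ω, p ω * acc (V ω) e) - (∑ ω, p ω * acc (V ω) x)
      = ∫ t in x..e, (e - t) * m t := fun x => by
    rw [← Finset.sum_sub_distrib]
    simp_rw [← mul_sub, sub_eq_integral_of_schervish hm_int hacc]
    exact sum_mul_integral_sub_mul _ V p hp1 (hm_int x e)
  refine ⟨gain, fun x => ?_, fun hpos x hx => ?_⟩
  · linarith [gain x, integral_sub_mul_nonneg hm_nonneg e x]
  · linarith [gain x, integral_sub_mul_pos hpos hm_int hx]

/-- The Schervish form for estimates entails (strict) propriety. -/
theorem schervish_form_implies_proper_estimates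
    (acc : ℝ → ℝ → ℝ) (m : ℝ → ℝ)
    (hm_nonneg : ∀ t, 0 ≤ m t)
    (hm_int : ∀ a b : ℝ, IntervalIntegrable m MeasureTheory.volume a b)
    (hacc : ∀ k x : ℝ, acc k x = acc k k - ∫ t in x..k, (k - t) * m t)
    (Ω : Type) [Fintype Ω] (V : Ω → ℝ) (p : Ω → ℝ)
    (hp : ∀ ω, 0 ≤ p ω) (hp1 : ∑ ω, p ω = 1) :
    (∀ x : ℝ,
      (∑ ω, p ω * acc (V ω) (∑ ω, p ω * V ω)) - (∑ ω, p ω * acc (V ω) x)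
        = ∫ t in x..(∑ ω, p ω * V ω), ((∑ ω, p ω * V ω) - t) * m t) ∧
    (∀ x : ℝ,
      ∑ ω, p ω * acc (V ω) x ≤ ∑ ω, p ω * acc (V ω) (∑ ω, p ω * V ω)) ∧
    ((∀ t, 0 < m t) → ∀ x : ℝ, x ≠ ∑ ω, p ω * V ω →
      ∑ ω, p ω * acc (V ω) x < ∑ ω, p ω * acc (V ω) (∑ ω, p ω * V ω)) :=
  schervish_form_implies_proper_estimates_general acc m hm_nonneg hm_int hacc Ω V p hp1
end

section
/- (Bregman expectation identity for estimates.) Suppose acc_v(x) = acc_v(v) - [φ(v) - φ(x) - (v - x)·φ'(x)] for a differentiable φ : ℝ → ℝ, all v, x ∈ ℝ. Then for any finite Ω, V : Ω → ℝ, probability mass function p, and e := Σ_ω p(ω)·V(ω): Σ_ω p(ω)·acc_{V(ω)}(e) - Σ_ω p(ω)·acc_{V(ω)}(x) = φ(e) - φ(x) - (e - x)·φ'(x) for all x ∈ ℝ. -/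
open Finset

/-- The Bregman divergence of `φ` with respect to the slope function `φ'`. -/
def bregmanDiv {R : Type*} [CommRing R] (φ φ' : R → R) (v x : R) : R :=
  φ v - φ x - (v - x) * φ' x

section

variable {R ι : Type*} [CommRing R] (φ φ' : R → R) {s : Finset ι} {w V : ι → R}

theorem sum_mul_bregmanDiv (hw : ∑ i ∈ s, w i = 1) (y : R) :
    ∑ i ∈ s, w i * bregmanDiv φ φ' (V i) y
      = ∑ i ∈ s, w i * φ (V i) - φ y - (∑ i ∈ s, w i * V i - y) * φ' y := by
  simp only [bregmanDiv, mul_sub, sum_sub_distrib, ← sum_mul, ← mul_assoc, hw]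
  ring

theorem sum_mul_bregmanDiv_sub_sum_mul_bregmanDiv_mean (hw : ∑ i ∈ s, w i = 1) (x : R) :
    ∑ i ∈ s, w i * bregmanDiv φ φ' (V i) x
        - ∑ i ∈ s, w i * bregmanDiv φ φ' (V i) (∑ i ∈ s, w i * V i)
      = bregmanDiv φ φ' (∑ i ∈ s, w i * V i) x := by
  rw [sum_mul_bregmanDiv φ φ' hw, sum_mul_bregmanDiv φ φ' hw, bregmanDiv]
  ring

end

theorem bregman_expectation_identity_general
    (φ : ℝ → ℝ)
    (c : ℝ → ℝ) (acc : ℝ → ℝ → ℝ)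
    (hacc : ∀ v x : ℝ, acc v x = c v - (φ v - φ x - (v - x) * deriv φ x))
    (Ω : Type) [Fintype Ω] (V : Ω → ℝ) (p : Ω → ℝ)
    (hp1 : ∑ ω, p ω = 1) :
    ∀ x : ℝ,
      (∑ ω, p ω * acc (V ω) (∑ ω, p ω * V ω)) - (∑ ω, p ω * acc (V ω) x)
        = φ (∑ ω, p ω * V ω) - φ x - ((∑ ω, p ω * V ω) - x) * deriv φ x := by
  intro x
  have hacc_sum : ∀ y, ∑ ω, p ω * acc (V ω) y
      = ∑ ω, p ω * c (V ω) - ∑ ω, p ω * bregmanDiv φ (deriv φ) (V ω) y := by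
    intro y
    simp only [hacc, bregmanDiv, mul_sub, sum_sub_distrib]
  rw [hacc_sum, hacc_sum, sub_sub_sub_cancel_left,
    sum_mul_bregmanDiv_sub_sum_mul_bregmanDiv_mean φ (deriv φ) hp1, bregmanDiv]

/-- The Bregman expectation identity for estimates. -/
theorem bregman_expectation_identity
    (φ : ℝ → ℝ) (hdiff : Differentiable ℝ φ)
    (c : ℝ → ℝ) (acc : ℝ → ℝ → ℝ)
    (hacc : ∀ v x : ℝ, acc v x = c v - (φ v - φ x - (v - x) * deriv φ x))
    (Ω : Type) [Fintype Ω] (V : Ω → ℝ) (p : Ω → ℝ)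
    (hp : ∀ ω, 0 ≤ p ω) (hp1 : ∑ ω, p ω = 1) :
    ∀ x : ℝ,
      (∑ ω, p ω * acc (V ω) (∑ ω, p ω * V ω)) - (∑ ω, p ω * acc (V ω) x)
        = φ (∑ ω, p ω * V ω) - φ x - ((∑ ω, p ω * V ω) - x) * deriv φ x :=
  bregman_expectation_identity_general φ c acc hacc Ω V p hp1
end
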